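/- Let H be a finite group, N ⊴ H a normal subgroup, and S̄ ⊆ H/N a subset such that (i) the Haar graph H(H/N, S̄) is not vertex-transitive, and (ii) S̄ ≠ S̄x and S̄ ≠ xS̄ for every non-identity element x ∈ H/N. Then there exists a subset S ⊆ H (namely S = ⋃_{aN ∈ S̄} aN) such that the Haar graph H(H,S) is not a Cayley graph. -/

import Mathlib

/-!
The projection `(i, h) ↦ (i, hN)` pulls the adjacency of `H(H/N, S̄)` back to that of `H(H, S)`,
so `H(H, S)` is a blow-up of `H(H/N, S̄)`. When `S̄` is nonempty, condition (ii) says exactly that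
distinct vertices of `H(H/N, S̄)` have distinct neighbourhoods; hence the fibres of the projection
are the classes of vertices of `H(H, S)` with equal neighbourhoods. Automorphisms permute these
classes, so they descend, and vertex-transitivity of `H(H, S)` (which a Cayley graph has) would
pass to `H(H/N, S̄)`. For `S̄ = ∅` both graphs are edgeless, hence vertex-transitive.
-/

/-- The Haar graph of a group `H` with connection set `S ⊆ H`: the bipartite
graph on two copies of `H` (indexed by `Bool`; `false` is the copy `H₀`,
`true` is the copy `H₁`) in which `h₀` is adjacent to `(s*h)₁` for `s ∈ S`. -/
def haarGraph {H : Type*} [Group H] (S : Set H) : SimpleGraph (Bool × H) where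
  Adj u v := (u.1 = false ∧ v.1 = true ∧ v.2 * u.2⁻¹ ∈ S) ∨
             (u.1 = true ∧ v.1 = false ∧ u.2 * v.2⁻¹ ∈ S)
  symm := by
    constructor
    rintro ⟨i, x⟩ ⟨j, y⟩ (⟨h1, h2, h3⟩ | ⟨h1, h2, h3⟩)
    · exact Or.inr ⟨h2, h1, h3⟩
    · exact Or.inl ⟨h2, h1, h3⟩
  loopless := by
    constructor
    rintro ⟨i, x⟩ (⟨h1, h2, _⟩ | ⟨h1, h2, _⟩) <;> simp_all

/-- A graph is a Cayley graph if its automorphism group contains a subgroup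
acting regularly on the vertex set. -/
def IsCayleyGraph {V : Type*} (Γ : SimpleGraph V) : Prop :=
  ∃ G : Subgroup (Equiv.Perm V),
    (∀ g ∈ G, ∀ u v : V, Γ.Adj (g u) (g v) ↔ Γ.Adj u v) ∧
    (∀ u v : V, ∃! g : Equiv.Perm V, g ∈ G ∧ g u = v)

/-- A graph is vertex-transitive if its automorphism group acts transitively
on the vertices. -/
def IsVertexTransitive {V : Type*} (Γ : SimpleGraph V) : Prop :=
  ∀ u v : V, ∃ f : Γ ≃g Γ, f u = v

/-- A group is inner abelian if it is non-abelian but every proper subgroup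
is abelian. -/
def IsInnerAbelian (H : Type*) [Group H] : Prop :=
  (¬ ∀ a b : H, a * b = b * a) ∧
    ∀ K : Subgroup H, K ≠ ⊤ → ∀ a b : H, a ∈ K → b ∈ K → a * b = b * a

namespace SimpleGraph

variable {V W : Type*} {Γ : SimpleGraph V} {Δ : SimpleGraph W} {f : V → W}

theorem neighborSet_eq_preimage (hadj : ∀ u v, Γ.Adj u v ↔ Δ.Adj (f u) (f v)) (u : V) :
    Γ.neighborSet u = f ⁻¹' Δ.neighborSet (f u) :=
  Set.ext fun v => hadj u v

theorem map_eq_map_iff_neighborSet_eq (hf : f.Surjective)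
    (hadj : ∀ u v, Γ.Adj u v ↔ Δ.Adj (f u) (f v)) (hΔ : Δ.neighborSet.Injective) {u v : V} :
    f u = f v ↔ Γ.neighborSet u = Γ.neighborSet v := by
  rw [neighborSet_eq_preimage hadj, neighborSet_eq_preimage hadj,
    (Set.preimage_injective.mpr hf).eq_iff, hΔ.eq_iff]

theorem Iso.map_eq_map_of_eq (hf : f.Surjective)
    (hadj : ∀ u v, Γ.Adj u v ↔ Δ.Adj (f u) (f v)) (hΔ : Δ.neighborSet.Injective)
    (φ : Γ ≃g Γ) {u v : V} (h : f u = f v) : f (φ u) = f (φ v) := by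
  rw [map_eq_map_iff_neighborSet_eq hf hadj hΔ] at h ⊢
  rw [← φ.image_neighborSet, ← φ.image_neighborSet, h]

theorem Iso.map_surjInv_map (hf : f.Surjective)
    (hadj : ∀ u v, Γ.Adj u v ↔ Δ.Adj (f u) (f v)) (hΔ : Δ.neighborSet.Injective)
    (φ : Γ ≃g Γ) (u : V) : f (φ (Function.surjInv hf (f u))) = f (φ u) :=
  φ.map_eq_map_of_eq hf hadj hΔ (Function.surjInv_eq hf _)

noncomputable def Iso.descend (hf : f.Surjective)
    (hadj : ∀ u v, Γ.Adj u v ↔ Δ.Adj (f u) (f v)) (hΔ : Δ.neighborSet.Injective)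
    (φ : Γ ≃g Γ) : Δ ≃g Δ where
  toFun y := f (φ (Function.surjInv hf y))
  invFun y := f (φ.symm (Function.surjInv hf y))
  left_inv y := by
    obtain ⟨u, rfl⟩ := hf y
    simp only [φ.map_surjInv_map hf hadj hΔ, φ.symm.map_surjInv_map hf hadj hΔ,
      RelIso.symm_apply_apply]
  right_inv y := by
    obtain ⟨u, rfl⟩ := hf y
    simp only [φ.map_surjInv_map hf hadj hΔ, φ.symm.map_surjInv_map hf hadj hΔ,
      RelIso.apply_symm_apply]
  map_rel_iff' {y z} := by
    obtain ⟨u, rfl⟩ := hf y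
    obtain ⟨v, rfl⟩ := hf z
    simp only [Equiv.coe_fn_mk, φ.map_surjInv_map hf hadj hΔ, ← hadj, φ.map_adj_iff]

end SimpleGraph

section VertexTransitive

variable {V W : Type*} {Γ : SimpleGraph V} {Δ : SimpleGraph W} {f : V → W}

theorem IsVertexTransitive.of_surjective (hΓ : IsVertexTransitive Γ) (hf : f.Surjective)
    (hadj : ∀ u v, Γ.Adj u v ↔ Δ.Adj (f u) (f v)) (hΔ : Δ.neighborSet.Injective) :
    IsVertexTransitive Δ := by
  intro y z
  obtain ⟨u, rfl⟩ := hf y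
  obtain ⟨v, rfl⟩ := hf z
  obtain ⟨φ, rfl⟩ := hΓ u v
  exact ⟨φ.descend hf hadj hΔ, φ.map_surjInv_map hf hadj hΔ u⟩

theorem IsCayleyGraph.isVertexTransitive (hΓ : IsCayleyGraph Γ) : IsVertexTransitive Γ := by
  obtain ⟨G, hG_adj, hG_reg⟩ := hΓ
  intro u v
  obtain ⟨g, ⟨hg, rfl⟩, -⟩ := hG_reg u v
  exact ⟨⟨g, hG_adj g hg _ _⟩, rfl⟩

theorem isVertexTransitive_bot : IsVertexTransitive (⊥ : SimpleGraph V) := by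
  classical
  exact fun u v => ⟨⟨Equiv.swap u v, Iff.rfl⟩, Equiv.swap_apply_left u v⟩

end VertexTransitive

section Haar

variable {H K : Type*} [Group H] [Group K]

@[simp]
theorem haarGraph_adj_false_true {S : Set H} {a b : H} :
    (haarGraph S).Adj (false, a) (true, b) ↔ b * a⁻¹ ∈ S := by
  simp [haarGraph]

@[simp]
theorem haarGraph_adj_true_false {S : Set H} {a b : H} :
    (haarGraph S).Adj (true, a) (false, b) ↔ a * b⁻¹ ∈ S := by
  simp [haarGraph]

@[simp]
theorem haarGraph_not_adj_self {S : Set H} {i : Bool} {a b : H} :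
    ¬ (haarGraph S).Adj (i, a) (i, b) := by
  cases i <;> simp [haarGraph]

theorem haarGraph_empty : haarGraph (∅ : Set H) = ⊥ := by
  ext u v
  simp [haarGraph]

theorem haarGraph_preimage_adj (φ : H →* K) (S : Set K) (u v : Bool × H) :
    (haarGraph (φ ⁻¹' S)).Adj u v ↔
      (haarGraph S).Adj (Prod.map id φ u) (Prod.map id φ v) := by
  simp [haarGraph]

theorem eq_of_forall_mul_inv_mem_iff {S : Set H}
    (hS : ∀ x, (· * x) '' S = S → x = 1) {a c : H}
    (h : ∀ z, z * a⁻¹ ∈ S ↔ z * c⁻¹ ∈ S) : a = c := by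
  have : (· * (c * a⁻¹)) '' S = S := by
    rw [Set.image_mul_right]
    ext t
    simpa [mul_assoc] using (h (t * a)).symm
  exact (mul_inv_eq_one.mp (hS _ this)).symm

theorem eq_of_forall_mul_inv_mem_iff' {S : Set H}
    (hS : ∀ x, (x * ·) '' S = S → x = 1) {a c : H}
    (h : ∀ z, a * z⁻¹ ∈ S ↔ c * z⁻¹ ∈ S) : a = c := by
  have : (a * c⁻¹ * ·) '' S = S := by
    rw [Set.image_mul_left]
    ext t
    simpa [mul_assoc] using (h (t⁻¹ * a)).symm
  exact mul_inv_eq_one.mp (hS _ this)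

theorem haarGraph_neighborSet_injective {S : Set H} (hne : S.Nonempty)
    (hright : ∀ x, (· * x) '' S = S → x = 1) (hleft : ∀ x, (x * ·) '' S = S → x = 1) :
    (haarGraph S).neighborSet.Injective := by
  rintro ⟨i, a⟩ ⟨j, c⟩ h
  have hadj w : (haarGraph S).Adj (i, a) w ↔ (haarGraph S).Adj (j, c) w := Set.ext_iff.mp h w
  obtain ⟨s, hs⟩ := hne
  cases i <;> cases j
  · simpa using eq_of_forall_mul_inv_mem_iff hright fun z => by simpa using hadj (true, z)
  · simpa [hs] using hadj (true, s * a)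
  · simpa [hs] using (hadj (true, s * c)).symm
  · simpa using eq_of_forall_mul_inv_mem_iff' hleft fun z => by simpa using hadj (false, z)

end Haar

theorem quotient_criterion_non_cayley_haar_general
    {H : Type*} [Group H] (N : Subgroup H) [N.Normal]
    (Sbar : Set (H ⧸ N))
    (h1 : ¬ IsVertexTransitive (haarGraph Sbar))
    (h2 : ∀ x : H ⧸ N, x ≠ 1 →
      Sbar ≠ (fun s => s * x) '' Sbar ∧ Sbar ≠ (fun s => x * s) '' Sbar) :
    ∃ S : Set H, S = (QuotientGroup.mk : H → H ⧸ N) ⁻¹' Sbar ∧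
      ¬ IsCayleyGraph (haarGraph S) := by
  refine ⟨_, rfl, fun (hCayley : IsCayleyGraph _) => h1 ?_⟩
  rcases Sbar.eq_empty_or_nonempty with rfl | hne
  · rw [haarGraph_empty]
    exact isVertexTransitive_bot
  have hright (x : H ⧸ N) (hx : (· * x) '' Sbar = Sbar) : x = 1 :=
    by_contra fun h => (h2 x h).1 hx.symm
  have hleft (x : H ⧸ N) (hx : (x * ·) '' Sbar = Sbar) : x = 1 :=
    by_contra fun h => (h2 x h).2 hx.symm
  exact hCayley.isVertexTransitive.of_surjective
    (Function.surjective_id.prodMap QuotientGroup.mk_surjective)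
    (haarGraph_preimage_adj (QuotientGroup.mk' N) Sbar)
    (haarGraph_neighborSet_injective hne hright hleft)

theorem quotient_criterion_non_cayley_haar
    {H : Type*} [Group H] [Finite H] (N : Subgroup H) [N.Normal]
    (Sbar : Set (H ⧸ N))
    (h1 : ¬ IsVertexTransitive (haarGraph Sbar))
    (h2 : ∀ x : H ⧸ N, x ≠ 1 →
      Sbar ≠ (fun s => s * x) '' Sbar ∧ Sbar ≠ (fun s => x * s) '' Sbar) :
    ∃ S : Set H, S = (QuotientGroup.mk : H → H ⧸ N) ⁻¹' Sbar ∧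
      ¬ IsCayleyGraph (haarGraph S) :=
  quotient_criterion_non_cayley_haar_general N Sbar h1 h2
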